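/- In the graph SPECIAL(n, a) (with n ≥ 4, a ≥ 1), the greedy minimum-degree heuristic for independent set — repeatedly select a vertex of minimum degree, add it to the set, and delete it together with its neighbors — outputs an independent set of size exactly 3 ({u, v} and one vertex of the clique C), while the maximum independent set has size n. Hence the greedy approximation ratio on this family is 3/n, which tends to 0 as n → ∞. -/

import Mathlib

open Classical

/-- A set of vertices is independent: pairwise nonadjacent. -/
def IsIndepSet {W : Type*} (G : SimpleGraph W) (s : Set W) : Prop :=
  s.Pairwise fun a b => ¬ G.Adj a b

/-- The size of a maximum independent set of `G`. -/
noncomputable def misSize {W : Type*} (G : SimpleGraph W) : ℕ :=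
  sSup {n | ∃ s : Finset W, IsIndepSet G ↑s ∧ s.card = n}

/-- Vertices of `SPECIAL(n, a)`: `Sum.inl 0 = u`, `Sum.inl 1 = v`,
`Sum.inr (Sum.inl i)` are the vertices of the independent set `I` (size `n`),
and `Sum.inr (Sum.inr j)` are the vertices of the clique `C` (size `n + a`). -/
abbrev SpecialV (n a : ℕ) := Fin 2 ⊕ (Fin n ⊕ Fin (n + a))

/-- The graph `SPECIAL(n, a)`: `u` and `v` are adjacent to all of `I`, every
vertex of `I` is adjacent to every vertex of `C`, `C` is a clique, and there
are no other edges. -/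
def special (n a : ℕ) : SimpleGraph (SpecialV n a) :=
  SimpleGraph.fromRel fun x y =>
    match x, y with
    | Sum.inl _, Sum.inr (Sum.inl _) => True
    | Sum.inr (Sum.inl _), Sum.inr (Sum.inr _) => True
    | Sum.inr (Sum.inr _), Sum.inr (Sum.inr _) => True
    | _, _ => False

/-- One step of the greedy minimum-degree heuristic.  The state is a pair
`(A, S)`: `A` is the set of remaining vertices and `S` the independent set built
so far.  A vertex `w ∈ A` of minimum degree in the induced subgraph on `A` is
selected, added to `S`, and deleted from `A` together with all its neighbors. -/
noncomputable def GreedyStep {W : Type*} [DecidableEq W] (H : SimpleGraph W)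
    (p q : Finset W × Finset W) : Prop :=
  ∃ w ∈ p.1,
    (∀ x ∈ p.1, (p.1.filter fun y => H.Adj w y).card ≤ (p.1.filter fun y => H.Adj x y).card) ∧
    q.1 = p.1 \ insert w (p.1.filter fun y => H.Adj w y) ∧
    q.2 = insert w p.2

/-!
On `SPECIAL(n, a)` the hubs `u`, `v` have degree `n`, while every other vertex has at least
`n + 1` neighbours, so greedy first picks a hub, which deletes `I`. The other hub is then
isolated and is picked next, leaving the clique `C`, from which exactly one vertex is taken.
The states of every run are thus among four explicit shapes (`IsGreedyReachable`), and the
only one with no vertices left is `(∅, {u, v, c})`. A maximum independent set either meets `I`,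
and then lies inside `I` since `I` is complete to its complement, or has at most the two hubs
and one clique vertex.
-/

section Graph

variable {W : Type*} [DecidableEq W] {H : SimpleGraph W}

lemma GreedyStep.fst_nonempty {p q : Finset W × Finset W} (h : GreedyStep H p q) :
    p.1.Nonempty :=
  let ⟨w, hw, _⟩ := h
  ⟨w, hw⟩

lemma sdiff_insert_filter_adj_eq_empty {A : Finset W} {w : W} (hA : H.IsClique (A : Set W))
    (hw : w ∈ A) : A \ insert w (A.filter fun y => H.Adj w y) = ∅ := by
  refine Finset.sdiff_eq_empty_iff_subset.mpr fun x hx => ?_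
  by_cases hxw : x = w
  · exact hxw ▸ Finset.mem_insert_self _ _
  · exact Finset.mem_insert_of_mem (Finset.mem_filter.mpr ⟨hx, hA hw hx (Ne.symm hxw)⟩)

lemma IsIndepSet.card_inter_le_one_of_isClique {s t : Finset W} (hs : IsIndepSet H (s : Set W))
    (ht : H.IsClique (t : Set W)) : (s ∩ t).card ≤ 1 :=
  Finset.card_le_one.mpr fun x hx y hy => by
    by_contra hxy
    simp only [Finset.mem_inter] at hx hy
    exact hs hx.1 hy.1 hxy (ht hx.2 hy.2 hxy)

end Graph

namespace Special

open Function

variable {n a : ℕ}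

def indepPart (n a : ℕ) : Finset (SpecialV n a) :=
  Finset.univ.map (Embedding.inl.trans Embedding.inr)

def cliquePart (n a : ℕ) : Finset (SpecialV n a) :=
  Finset.univ.map (Embedding.inr.trans Embedding.inr)

@[simp] lemma mem_indepPart (x : SpecialV n a) :
    x ∈ indepPart n a ↔ ∃ i, Sum.inr (Sum.inl i) = x := by
  simp [indepPart]

@[simp] lemma mem_cliquePart (x : SpecialV n a) :
    x ∈ cliquePart n a ↔ ∃ j, Sum.inr (Sum.inr j) = x := by
  simp [cliquePart]

@[simp] lemma card_indepPart : (indepPart n a).card = n := by simp [indepPart]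

@[simp] lemma card_cliquePart : (cliquePart n a).card = n + a := by simp [cliquePart]

lemma adj_inl_iff (t : Fin 2) (y : SpecialV n a) :
    (special n a).Adj (Sum.inl t) y ↔ y ∈ indepPart n a := by
  rcases y with s | i | j <;> simp [special]

lemma isClique_cliquePart : (special n a).IsClique (cliquePart n a : Set (SpecialV n a)) := by
  rintro _ hx _ hy hxy
  obtain ⟨j, rfl⟩ := (mem_cliquePart _).mp hx
  obtain ⟨j', rfl⟩ := (mem_cliquePart _).mp hy
  simpa [special] using hxy

lemma exists_adj_mem_cliquePart (h : 2 ≤ n + a) (j : Fin (n + a)) :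
    ∃ x ∈ cliquePart n a, (special n a).Adj (Sum.inr (Sum.inr j)) x := by
  have : Nontrivial (Fin (n + a)) := Fin.nontrivial_iff_two_le.mpr h
  obtain ⟨j', hj'⟩ := exists_ne j
  exact ⟨_, (mem_cliquePart _).mpr ⟨j', rfl⟩,
    isClique_cliquePart (by simp) (by simp) (by simpa using hj'.symm)⟩

lemma lt_card_filter_adj_inr (h : 2 ≤ n + a) (x : Fin n ⊕ Fin (n + a)) :
    n < (Finset.univ.filter fun y => (special n a).Adj (Sum.inr x) y).card := by
  rcases x with i | j
  · have hsub : insert (Sum.inl 0) (cliquePart n a) ⊆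
        Finset.univ.filter fun y => (special n a).Adj (Sum.inr (Sum.inl i)) y := by
      intro y hy
      rcases Finset.mem_insert.mp hy with rfl | hy
      · simp [special]
      · obtain ⟨j, rfl⟩ := (mem_cliquePart _).mp hy
        simp [special]
    have := Finset.card_le_card hsub
    rw [Finset.card_insert_of_notMem (by simp), card_cliquePart] at this
    omega
  · obtain ⟨x, hx, hadj⟩ := exists_adj_mem_cliquePart h j
    have hsub : insert x (indepPart n a) ⊆
        Finset.univ.filter fun y => (special n a).Adj (Sum.inr (Sum.inr j)) y := by
      intro y hy
      rcases Finset.mem_insert.mp hy with rfl | hy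
      · simpa using hadj
      · obtain ⟨i, rfl⟩ := (mem_indepPart _).mp hy
        simp [special]
    have := Finset.card_le_card hsub
    rw [Finset.card_insert_of_notMem ?_, card_indepPart] at this
    · omega
    · obtain ⟨j', rfl⟩ := (mem_cliquePart _).mp hx
      simp

lemma greedyStep_univ (h : 2 ≤ n + a) {q : Finset (SpecialV n a) × Finset (SpecialV n a)}
    (hq : GreedyStep (special n a) (Finset.univ, ∅) q) :
    ∃ s t : Fin 2, s ≠ t ∧ q = (insert (Sum.inl s) (cliquePart n a), {Sum.inl t}) := by
  obtain ⟨w, -, hmin, hq1, hq2⟩ := hq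
  have hfilter (t : Fin 2) : (Finset.univ.filter fun y => (special n a).Adj (Sum.inl t) y) =
      indepPart n a := by
    ext y; simp only [Finset.mem_filter, Finset.mem_univ, true_and, adj_inl_iff]
  obtain ⟨t, rfl⟩ : ∃ t, Sum.inl t = w := by
    rcases w with t | x
    · exact ⟨t, rfl⟩
    · have := hmin (Sum.inl 0) (Finset.mem_univ _)
      rw [hfilter, card_indepPart] at this
      exact absurd this (not_le.mpr (lt_card_filter_adj_inr h x))
  refine ⟨1 - t, t, by omega, Prod.ext ?_ hq2⟩
  rw [hq1, hfilter]
  ext y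
  rcases y with s | i | j
  · simp only [Finset.mem_sdiff, Finset.mem_univ, Finset.mem_insert, Sum.inl.injEq, mem_indepPart,
      reduceCtorEq, exists_false, or_false, true_and, mem_cliquePart]
    omega
  all_goals simp

lemma greedyStep_insert_inl_cliquePart (h : 2 ≤ n + a) {s t : Fin 2} (hst : s ≠ t)
    {q : Finset (SpecialV n a) × Finset (SpecialV n a)}
    (hq : GreedyStep (special n a) (insert (Sum.inl s) (cliquePart n a), {Sum.inl t}) q) :
    q = (cliquePart n a, {Sum.inl 0, Sum.inl 1}) := by
  obtain ⟨w, hw, hmin, hq1, hq2⟩ := hq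
  dsimp only at hw hmin hq1 hq2
  have hfilter : ((insert (Sum.inl s) (cliquePart n a)).filter
      fun y => (special n a).Adj (Sum.inl s) y) = ∅ := by
    refine Finset.filter_eq_empty_iff.mpr fun y hy => ?_
    rw [adj_inl_iff]
    rcases Finset.mem_insert.mp hy with rfl | hy
    · simp
    · obtain ⟨j, rfl⟩ := (mem_cliquePart _).mp hy
      simp
  obtain rfl : w = Sum.inl s := by
    rcases Finset.mem_insert.mp hw with rfl | hw
    · rfl
    obtain ⟨j, rfl⟩ := (mem_cliquePart _).mp hw
    have hdeg := hmin (Sum.inl s) (Finset.mem_insert_self _ _)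
    rw [hfilter, Finset.card_empty, Nat.le_zero, Finset.card_eq_zero,
      Finset.filter_eq_empty_iff] at hdeg
    obtain ⟨x, hx, hadj⟩ := exists_adj_mem_cliquePart h j
    exact absurd hadj (hdeg (Finset.mem_insert_of_mem hx))
  refine Prod.ext ?_ ?_
  · rw [hq1, hfilter, insert_empty_eq, Finset.sdiff_singleton_eq_erase,
      Finset.erase_insert (by simp)]
  · rw [hq2]
    fin_cases s <;> fin_cases t <;> simp_all [Finset.pair_comm]

lemma greedyStep_cliquePart {T : Finset (SpecialV n a)}
    {q : Finset (SpecialV n a) × Finset (SpecialV n a)}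
    (hq : GreedyStep (special n a) (cliquePart n a, T) q) :
    ∃ j, q = (∅, insert (Sum.inr (Sum.inr j)) T) := by
  obtain ⟨w, hw, -, hq1, hq2⟩ := hq
  obtain ⟨j, rfl⟩ := (mem_cliquePart _).mp hw
  exact ⟨j, Prod.ext (hq1.trans (sdiff_insert_filter_adj_eq_empty isClique_cliquePart hw)) hq2⟩

def IsGreedyReachable (n a : ℕ) (p : Finset (SpecialV n a) × Finset (SpecialV n a)) : Prop :=
  p = (Finset.univ, ∅) ∨
  (∃ s t : Fin 2, s ≠ t ∧ p = (insert (Sum.inl s) (cliquePart n a), {Sum.inl t})) ∨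
  p = (cliquePart n a, {Sum.inl 0, Sum.inl 1}) ∨
  ∃ j, p = (∅, {Sum.inl 0, Sum.inl 1, Sum.inr (Sum.inr j)})

lemma IsGreedyReachable.greedyStep (h : 2 ≤ n + a)
    {p q : Finset (SpecialV n a) × Finset (SpecialV n a)} (hp : IsGreedyReachable n a p)
    (hq : GreedyStep (special n a) p q) : IsGreedyReachable n a q := by
  rcases hp with rfl | ⟨s, t, hst, rfl⟩ | rfl | ⟨j, rfl⟩
  · exact Or.inr (Or.inl (greedyStep_univ h hq))
  · exact Or.inr (Or.inr (Or.inl (greedyStep_insert_inl_cliquePart h hst hq)))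
  · obtain ⟨j, rfl⟩ := greedyStep_cliquePart hq
    refine Or.inr (Or.inr (Or.inr ⟨j, ?_⟩))
    rw [Finset.insert_comm, Finset.pair_comm]
  · exact absurd hq.fst_nonempty Finset.not_nonempty_empty

lemma isGreedyReachable_of_run (h : 2 ≤ n + a) {p : Finset (SpecialV n a) × Finset (SpecialV n a)}
    (hrun : Relation.ReflTransGen (GreedyStep (special n a)) (Finset.univ, ∅) p) :
    IsGreedyReachable n a p := by
  induction hrun with
  | refl => exact Or.inl rfl
  | tail _ hstep ih => exact ih.greedyStep h hstep

lemma IsGreedyReachable.exists_eq_of_fst_eq_empty (h : 1 ≤ n + a) {S : Finset (SpecialV n a)}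
    (hS : IsGreedyReachable n a (∅, S)) :
    ∃ j, S = {Sum.inl 0, Sum.inl 1, Sum.inr (Sum.inr j)} := by
  rcases hS with hS | ⟨s, t, -, hS⟩ | hS | ⟨j, hS⟩
  · exact absurd (congrArg Prod.fst hS).symm (Finset.univ_nonempty.ne_empty)
  · exact absurd (congrArg Prod.fst hS).symm (Finset.insert_ne_empty _ _)
  · have : (cliquePart n a).Nonempty := Finset.card_pos.mp (by rw [card_cliquePart]; omega)
    exact absurd (congrArg Prod.fst hS).symm this.ne_empty
  · exact ⟨j, congrArg Prod.snd hS⟩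

lemma adj_of_mem_indepPart {x y : SpecialV n a} (hx : x ∈ indepPart n a) (hy : y ∉ indepPart n a) :
    (special n a).Adj x y := by
  obtain ⟨i, rfl⟩ := (mem_indepPart _).mp hx
  rcases y with t | i' | j
  · simp [special]
  · simp at hy
  · simp [special]

lemma isIndepSet_indepPart : IsIndepSet (special n a) (indepPart n a : Set (SpecialV n a)) := by
  rintro _ hx _ hy -
  obtain ⟨i, rfl⟩ := (mem_indepPart _).mp hx
  obtain ⟨i', rfl⟩ := (mem_indepPart _).mp hy
  simp [special]

lemma card_le_of_isIndepSet (hn : 3 ≤ n) {s : Finset (SpecialV n a)}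
    (hs : IsIndepSet (special n a) (s : Set (SpecialV n a))) : s.card ≤ n := by
  by_cases hI : ∃ x ∈ s, x ∈ indepPart n a
  · obtain ⟨x, hxs, hxI⟩ := hI
    have hsub : s ⊆ indepPart n a := fun y hys => by
      by_contra hyI
      exact hs hxs hys (fun h => hyI (h ▸ hxI)) (adj_of_mem_indepPart hxI hyI)
    simpa using Finset.card_le_card hsub
  · push Not at hI
    have hsub : s ⊆ {Sum.inl 0, Sum.inl 1} ∪ s ∩ cliquePart n a := by
      intro y hy
      rcases y with t | i | j
      · fin_cases t <;> simp
      · exact absurd (by simp) (hI _ hy)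
      · simp [hy]
    calc s.card ≤ ({Sum.inl 0, Sum.inl 1} ∪ s ∩ cliquePart n a).card := Finset.card_le_card hsub
      _ ≤ 2 + 1 := (Finset.card_union_le _ _).trans
          (add_le_add Finset.card_le_two (hs.card_inter_le_one_of_isClique isClique_cliquePart))
      _ ≤ n := hn

lemma misSize_special (hn : 3 ≤ n) : misSize (special n a) = n :=
  IsGreatest.csSup_eq ⟨⟨indepPart n a, isIndepSet_indepPart, card_indepPart⟩,
    fun _ ⟨_, hs, hcard⟩ => hcard ▸ card_le_of_isIndepSet hn hs⟩

end Special

open Special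

theorem stmt16_general (n a : ℕ) (hn : 4 ≤ n) (S : Finset (SpecialV n a))
    (hrun : Relation.ReflTransGen (GreedyStep (special n a))
      (Finset.univ, (∅ : Finset (SpecialV n a))) ((∅ : Finset (SpecialV n a)), S)) :
    S.card = 3 ∧
    (∃ c : Fin (n + a),
      S = {Sum.inl 0, Sum.inl 1, Sum.inr (Sum.inr c)}) ∧
    misSize (special n a) = n ∧
    (S.card : ℚ) / n = 3 / n := by
  obtain ⟨c, rfl⟩ :=
    (isGreedyReachable_of_run (by omega) hrun).exists_eq_of_fst_eq_empty (by omega)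
  have hcard : ({Sum.inl 0, Sum.inl 1, Sum.inr (Sum.inr c)} : Finset (SpecialV n a)).card = 3 := by
    simp
  exact ⟨hcard, ⟨c, rfl⟩, misSize_special (by omega), by rw [hcard, Nat.cast_ofNat]⟩

/-- on `SPECIAL(n, a)` with `n ≥ 4` and `a ≥ 1`, any complete run of
the greedy minimum-degree heuristic (started from the full vertex set and the
empty independent set, finishing with no remaining vertices) outputs exactly the
set `{u, v, c}` for some clique vertex `c`, of size 3, while the maximum
independent set has size `n` — so the greedy approximation ratio is `3 / n`. -/
theorem stmt16 (n a : ℕ) (hn : 4 ≤ n) (ha : 1 ≤ a) (S : Finset (SpecialV n a))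
    (hrun : Relation.ReflTransGen (GreedyStep (special n a))
      (Finset.univ, (∅ : Finset (SpecialV n a))) ((∅ : Finset (SpecialV n a)), S)) :
    S.card = 3 ∧
    (∃ c : Fin (n + a),
      S = {Sum.inl 0, Sum.inl 1, Sum.inr (Sum.inr c)}) ∧
    misSize (special n a) = n ∧
    (S.card : ℚ) / n = 3 / n :=
  stmt16_general n a hn S hrun
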